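/- arXiv:1903.03881 — 3 statements merged into one kernel-verified Lean document; each statement's English description precedes it below -/
import Mathlib

section
/- Let p be a prime and U ⊆ F_p^2 with #U = n·p - r, where 1 ≤ n < p and 0 ≤ r < p - n. Let W be the total number of U-rich lines, for each U-rich direction m let w_m be the number of U-rich lines with slope m, let Z be the sum of #(ℓ ∩ U) over all U-rich lines ℓ, and let Q := Σ_m w_m² (sum over all U-rich directions m). Then Z ≤ #U + W²/2 - Q/2 (inequality in ℚ). -/
/-!
Write `Z = ∑_{u ∈ U} d(u)`, where `d(u)` is the number of rich lines through `u`. Since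
`2d ≤ 2 + d(d-1)` for every natural number `d`, we get `2Z ≤ 2#U + ∑_u d(u)(d(u)-1)`, and the
last sum counts ordered pairs of distinct rich lines meeting in a point of `U`. Distinct lines
meet at most once and parallel lines never, so these are distinct pairs of non-parallel rich
lines, of which there are `W² - Q`.
-/

open Finset Polynomial

attribute [local instance] Classical.propDecidable

/-- The line in `(ZMod p)²` with slope `m` (where `none` denotes the vertical
slope `∞`) and "intercept" `c`. -/
noncomputable def lineWithSlope (p : ℕ) [NeZero p] (m : Option (ZMod p)) (c : ZMod p) :
    Finset (ZMod p × ZMod p) :=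
  match m with
  | some m => Finset.univ.filter fun q => q.2 = m * q.1 + c
  | none => Finset.univ.filter fun q => q.1 = c

/-- `ℓ` is `U`-rich: it meets `U` in at least `#U/p + 1` points. -/
def IsRich (p : ℕ) (U ℓ : Finset (ZMod p × ZMod p)) : Prop :=
  (U.card : ℚ) / p + 1 ≤ ((ℓ ∩ U).card : ℚ)

/-- `ℓ` is `U`-poor: it meets `U` in at most `#U/p - 1` points. -/
def IsPoor (p : ℕ) (U ℓ : Finset (ZMod p × ZMod p)) : Prop :=
  ((ℓ ∩ U).card : ℚ) ≤ (U.card : ℚ) / p - 1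

/-- `m` is a `U`-rich direction: some line with slope `m` is `U`-rich. -/
def IsRichDir (p : ℕ) [NeZero p] (U : Finset (ZMod p × ZMod p))
    (m : Option (ZMod p)) : Prop :=
  ∃ c : ZMod p, IsRich p U (lineWithSlope p m c)

/-- `m` is a `U`-special direction: some line with slope `m` is `U`-rich or `U`-poor. -/
def IsSpecialDir (p : ℕ) [NeZero p] (U : Finset (ZMod p × ZMod p))
    (m : Option (ZMod p)) : Prop :=
  ∃ c : ZMod p, IsRich p U (lineWithSlope p m c) ∨ IsPoor p U (lineWithSlope p m c)

/-- The set of `U`-rich lines, identified with pairs (slope, intercept). -/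
noncomputable def richLines (p : ℕ) [NeZero p] (U : Finset (ZMod p × ZMod p)) :
    Finset (Option (ZMod p) × ZMod p) :=
  Finset.univ.filter fun q => IsRich p U (lineWithSlope p q.1 q.2)

/-- The set of `U`-rich directions, as a finset. -/
noncomputable def richDirs (p : ℕ) [NeZero p] (U : Finset (ZMod p × ZMod p)) :
    Finset (Option (ZMod p)) :=
  Finset.univ.filter fun m => IsRichDir p U m

/-- `w_m`: the number of `U`-rich lines with slope `m`. -/
noncomputable def wSlope (p : ℕ) [NeZero p] (U : Finset (ZMod p × ZMod p))
    (m : Option (ZMod p)) : ℕ :=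
  (Finset.univ.filter fun c : ZMod p => IsRich p U (lineWithSlope p m c)).card

section IncidenceCounting

variable {ι α κ : Type*} [DecidableEq α] [DecidableEq κ] (line : ι → Finset α) (slope : ι → κ)

lemma sum_card_inter_eq_sum_card_incident (L : Finset ι) (U : Finset α) :
    ∑ i ∈ L, #(line i ∩ U) = ∑ u ∈ U, #{i ∈ L | u ∈ line i} := by
  convert sum_card_bipartiteAbove_eq_sum_card_bipartiteBelow (s := L) (t := U)
    (r := fun i u => u ∈ line i) using 2 with i
  · rw [bipartiteAbove, filter_mem_eq_inter, inter_comm]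
  · rfl

lemma card_filter_slope_eq_eq_sum_sq (L : Finset ι) (K : Finset κ)
    (hK : ∀ i ∈ L, slope i ∈ K) :
    #{ij ∈ L ×ˢ L | slope ij.1 = slope ij.2} = ∑ k ∈ K, #{i ∈ L | slope i = k} ^ 2 := by
  rw [card_filter, sum_product, ← sum_fiberwise_of_maps_to hK]
  refine sum_congr rfl fun k _ => ?_
  rw [sq, ← smul_eq_mul, ← sum_const]
  refine sum_congr rfl fun i hi => ?_
  rw [← card_filter]
  exact congrArg card (filter_congr fun j _ => by rw [(mem_filter.1 hi).2, eq_comm])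

variable {line slope}

lemma sum_card_offDiag_incident_le (L : Finset ι) (U : Finset α)
    (h_inter : ∀ i j, i ≠ j → #(line i ∩ line j) ≤ 1)
    (h_parallel : ∀ i j, i ≠ j → slope i = slope j → Disjoint (line i) (line j)) :
    ∑ u ∈ U, #{i ∈ L | u ∈ line i}.offDiag ≤ #{ij ∈ L ×ˢ L | slope ij.1 ≠ slope ij.2} := by
  have h_disj : (U : Set α).PairwiseDisjoint fun u => {i ∈ L | u ∈ line i}.offDiag := by
    intro u _ v _ huv
    refine disjoint_left.2 fun ij hu hv => ?_
    simp only [mem_offDiag, mem_filter] at hu hv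
    exact huv (card_le_one.1 (h_inter ij.1 ij.2 hu.2.2) u (mem_inter.2 ⟨hu.1.2, hu.2.1.2⟩) v
      (mem_inter.2 ⟨hv.1.2, hv.2.1.2⟩))
  rw [← card_biUnion h_disj]
  refine card_le_card (biUnion_subset.2 fun u _ ij hij => ?_)
  simp only [mem_offDiag, mem_filter] at hij
  refine mem_filter.2 ⟨mem_product.2 ⟨hij.1.1, hij.2.1.1⟩, fun h => ?_⟩
  exact disjoint_left.1 (h_parallel ij.1 ij.2 hij.2.2 h) hij.1.2 hij.2.1.2

lemma two_mul_le_two_add_mul_self_sub (d : ℕ) : 2 * d ≤ 2 + (d * d - d) := by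
  rcases d with _ | _ | d
  · simp
  · simp
  · rw [show (d + 2) * (d + 2) = (d + 2) + (d + 2) * (d + 1) by ring, Nat.add_sub_cancel_left]
    nlinarith

theorem two_mul_sum_card_inter_add_sum_sq_le (L : Finset ι) (U : Finset α) (K : Finset κ)
    (hK : ∀ i ∈ L, slope i ∈ K)
    (h_inter : ∀ i j, i ≠ j → #(line i ∩ line j) ≤ 1)
    (h_parallel : ∀ i j, i ≠ j → slope i = slope j → Disjoint (line i) (line j)) :
    2 * ∑ i ∈ L, #(line i ∩ U) + ∑ k ∈ K, #{i ∈ L | slope i = k} ^ 2 ≤ 2 * #U + #L ^ 2 := by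
  have h_split : #{ij ∈ L ×ˢ L | slope ij.1 ≠ slope ij.2}
      + #{ij ∈ L ×ˢ L | slope ij.1 = slope ij.2} = #L ^ 2 := by
    rw [add_comm, card_filter_add_card_filter_not, card_product, sq]
  have h_point : ∑ u ∈ U, 2 * #{i ∈ L | u ∈ line i}
      ≤ ∑ u ∈ U, (2 + #{i ∈ L | u ∈ line i}.offDiag) := by
    refine sum_le_sum fun u _ => ?_
    rw [offDiag_card]
    exact two_mul_le_two_add_mul_self_sub _
  rw [sum_card_inter_eq_sum_card_incident, mul_sum, ← card_filter_slope_eq_eq_sum_sq slope L K hK,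
    ← h_split]
  rw [sum_add_distrib, sum_const, smul_eq_mul] at h_point
  have := sum_card_offDiag_incident_le L U h_inter h_parallel
  omega

end IncidenceCounting

section Lines

variable {p : ℕ}

lemma mem_lineWithSlope_some [NeZero p] {m c : ZMod p} {u : ZMod p × ZMod p} :
    u ∈ lineWithSlope p (some m) c ↔ u.2 = m * u.1 + c := by
  simp [lineWithSlope]

lemma mem_lineWithSlope_none [NeZero p] {c : ZMod p} {u : ZMod p × ZMod p} :
    u ∈ lineWithSlope p none c ↔ u.1 = c := by
  simp [lineWithSlope]

lemma disjoint_lineWithSlope [NeZero p] {q q' : Option (ZMod p) × ZMod p} (h : q ≠ q')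
    (hm : q.1 = q'.1) : Disjoint (lineWithSlope p q.1 q.2) (lineWithSlope p q'.1 q'.2) := by
  obtain ⟨m, c⟩ := q
  obtain ⟨m', c'⟩ := q'
  dsimp only at hm ⊢
  subst hm
  refine disjoint_left.2 fun u hu hu' => h (Prod.ext rfl ?_)
  cases m with
  | none =>
    rw [mem_lineWithSlope_none] at hu hu'
    rw [← hu, hu']
  | some m =>
    rw [mem_lineWithSlope_some] at hu hu'
    exact add_left_cancel (hu.symm.trans hu')

lemma eq_of_mem_lineWithSlope [Fact p.Prime] {q q' : Option (ZMod p) × ZMod p}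
    {u v : ZMod p × ZMod p} (huv : u ≠ v)
    (hu : u ∈ lineWithSlope p q.1 q.2) (hv : v ∈ lineWithSlope p q.1 q.2)
    (hu' : u ∈ lineWithSlope p q'.1 q'.2) (hv' : v ∈ lineWithSlope p q'.1 q'.2) :
    q = q' := by
  obtain ⟨_ | m, c⟩ := q <;> obtain ⟨_ | m', c'⟩ := q' <;> dsimp only at hu hv hu' hv' ⊢
  · rw [mem_lineWithSlope_none] at hu hu'
    rw [← hu, ← hu']
  · rw [mem_lineWithSlope_none] at hu hv
    rw [mem_lineWithSlope_some] at hu' hv'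
    exact absurd (Prod.ext (hu.trans hv.symm) (by rw [hu', hv', hu, hv])) huv
  · rw [mem_lineWithSlope_some] at hu hv
    rw [mem_lineWithSlope_none] at hu' hv'
    exact absurd (Prod.ext (hu'.trans hv'.symm) (by rw [hu, hv, hu', hv'])) huv
  · rw [mem_lineWithSlope_some] at hu hv hu' hv'
    have hx : u.1 - v.1 ≠ 0 :=
      sub_ne_zero.2 fun h => huv (Prod.ext h (by rw [hu, hv, h]))
    have hm : m = m' :=
      mul_right_cancel₀ hx (by linear_combination hu.symm.trans hu' - hv.symm.trans hv')
    subst hm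
    rw [add_left_cancel (hu.symm.trans hu')]

lemma card_lineWithSlope_inter_le_one [Fact p.Prime] {q q' : Option (ZMod p) × ZMod p}
    (h : q ≠ q') : #(lineWithSlope p q.1 q.2 ∩ lineWithSlope p q'.1 q'.2) ≤ 1 := by
  refine card_le_one.2 fun u hu v hv => by_contra fun huv => h ?_
  rw [mem_inter] at hu hv
  exact eq_of_mem_lineWithSlope huv hu.1 hv.1 hu.2 hv.2

variable [NeZero p] (U : Finset (ZMod p × ZMod p))

lemma wSlope_eq_card_filter_richLines (m : Option (ZMod p)) :
    wSlope p U m = #{q ∈ richLines p U | q.1 = m} := by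
  refine card_bij (fun c _ => (m, c)) (fun c hc => ?_) (fun _ _ _ _ h => (Prod.ext_iff.1 h).2)
    fun q hq => ?_
  · simpa [richLines] using hc
  · simp only [richLines, mem_filter, mem_univ, true_and] at hq
    exact ⟨q.2, by simpa [← hq.2] using hq.1, by rw [← hq.2]⟩

lemma fst_mem_richDirs {q : Option (ZMod p) × ZMod p} (hq : q ∈ richLines p U) :
    q.1 ∈ richDirs p U :=
  mem_filter.2 ⟨mem_univ _, q.2, (mem_filter.1 hq).2⟩

end Lines

theorem sum_rich_line_lengths_general (p : ℕ) [Fact p.Prime]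
    (U : Finset (ZMod p × ZMod p)) :
    (∑ q ∈ richLines p U, ((lineWithSlope p q.1 q.2 ∩ U).card : ℚ))
      ≤ (U.card : ℚ) + ((richLines p U).card : ℚ) ^ 2 / 2
        - (∑ m ∈ richDirs p U, (wSlope p U m : ℚ) ^ 2) / 2 := by
  have h_count := two_mul_sum_card_inter_add_sum_sq_le (line := fun q => lineWithSlope p q.1 q.2)
    (richLines p U) U (richDirs p U) (fun _ => fst_mem_richDirs U)
    (fun _ _ => card_lineWithSlope_inter_le_one) (fun _ _ => disjoint_lineWithSlope)
  simp only [← wSlope_eq_card_filter_richLines] at h_count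
  have h_cast := (Nat.cast_le (α := ℚ)).2 h_count
  push_cast at h_cast
  linarith

theorem sum_rich_line_lengths (p n r : ℕ) [Fact p.Prime]
    (U : Finset (ZMod p × ZMod p))
    (hn : 1 ≤ n) (hnp : n < p) (hr : r + n < p)
    (hcard : (U.card : ℤ) = n * p - r) :
    (∑ q ∈ richLines p U, ((lineWithSlope p q.1 q.2 ∩ U).card : ℚ))
      ≤ (U.card : ℚ) + ((richLines p U).card : ℚ) ^ 2 / 2
        - (∑ m ∈ richDirs p U, (wSlope p U m : ℚ) ^ 2) / 2 :=
  sum_rich_line_lengths_general p U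
end

section
/- Let p be a prime and U ⊆ F_p^2 with #U = n·p - r, where 1 ≤ n ≤ p and 0 ≤ r < p. If m ∈ F_p ∪ {∞} is a direction that is not U-special, then exactly r of the p lines with slope m meet U in exactly n - 1 points and the remaining p - r lines with slope m meet U in exactly n points; consequently 2·c_m = (n - 1)·(n·p - 2r). -/
open Finset Polynomial

attribute [local instance] Classical.propDecidable

/-- `c_m`: the number of unordered pairs of distinct points of `U` lying on a common
line with slope `m`. -/
noncomputable def pairsCount (p : ℕ) [NeZero p] (U : Finset (ZMod p × ZMod p))
    (m : Option (ZMod p)) : ℕ :=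
  ((U.powersetCard 2).filter fun s => ∃ c : ZMod p, s ⊆ lineWithSlope p m c).card

/-! For a direction that is not special, each of the `p` parallel lines with that slope meets `U`
in a number of points strictly within `1` of `#U/p = n - r/p`, hence in `n - 1` or `n` points.
These lines partition the plane, so their counts add up to `n p - r`, which forces exactly `r` of
them to carry `n - 1` points. Finally `c_m` is the sum of `C(k, 2)` over the line counts `k`. -/

noncomputable def intercept (p : ℕ) (m : Option (ZMod p)) (q : ZMod p × ZMod p) : ZMod p :=
  match m with
  | some m => q.2 - m * q.1
  | none => q.1

section Lines

variable {p : ℕ} [NeZero p]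

lemma mem_lineWithSlope_iff {m : Option (ZMod p)} {c : ZMod p} {q : ZMod p × ZMod p} :
    q ∈ lineWithSlope p m c ↔ intercept p m q = c := by
  cases m with
  | none => simp [lineWithSlope, intercept]
  | some m => simp [lineWithSlope, intercept, sub_eq_iff_eq_add']

lemma lineWithSlope_inter_eq_filter (U : Finset (ZMod p × ZMod p)) (m : Option (ZMod p))
    (c : ZMod p) : lineWithSlope p m c ∩ U = U.filter fun q => intercept p m q = c := by
  ext q
  simp [mem_lineWithSlope_iff, and_comm]

lemma sum_card_lineWithSlope_inter (U : Finset (ZMod p × ZMod p)) (m : Option (ZMod p)) :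
    ∑ c, #(lineWithSlope p m c ∩ U) = #U := by
  simp only [lineWithSlope_inter_eq_filter]
  exact (card_eq_sum_card_fiberwise fun q _ => mem_univ (intercept p m q)).symm

lemma pairwiseDisjoint_powersetCard_lineWithSlope_inter (U : Finset (ZMod p × ZMod p))
    (m : Option (ZMod p)) {k : ℕ} (hk : k ≠ 0) :
    ((univ : Finset (ZMod p)) : Set (ZMod p)).PairwiseDisjoint
      fun c => (lineWithSlope p m c ∩ U).powersetCard k := by
  intro c _ d _ hcd
  rw [Function.onFun, disjoint_left]
  intro s hsc hsd
  rw [mem_powersetCard] at hsc hsd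
  obtain ⟨q, hq⟩ := card_pos.mp (hsc.2 ▸ Nat.pos_of_ne_zero hk)
  have hqc := mem_lineWithSlope_iff.mp (mem_inter.mp (hsc.1 hq)).1
  have hqd := mem_lineWithSlope_iff.mp (mem_inter.mp (hsd.1 hq)).1
  exact hcd (hqc.symm.trans hqd)

lemma pairsCount_eq_sum_choose (U : Finset (ZMod p × ZMod p)) (m : Option (ZMod p)) :
    pairsCount p U m = ∑ c, (#(lineWithSlope p m c ∩ U)).choose 2 := by
  have hpairs : ((U.powersetCard 2).filter fun s => ∃ c, s ⊆ lineWithSlope p m c) =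
      univ.biUnion fun c => (lineWithSlope p m c ∩ U).powersetCard 2 := by
    ext s
    simp only [mem_filter, mem_powersetCard, mem_biUnion, mem_univ, true_and, subset_inter_iff]
    tauto
  rw [pairsCount, hpairs, card_biUnion
    (pairwiseDisjoint_powersetCard_lineWithSlope_inter U m two_ne_zero)]
  simp only [card_powersetCard]

end Lines

lemma two_mul_cast_choose_two (k : ℕ) : 2 * (k.choose 2 : ℤ) = k * (k - 1) := by
  have hq : ((2 * (k.choose 2 : ℤ) : ℤ) : ℚ) = ((k * (k - 1) : ℤ) : ℚ) := by
    push_cast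
    rw [Nat.cast_choose_two]
    ring
  exact_mod_cast hq

lemma card_inter_eq_of_not_isRich_of_not_isPoor {p n r : ℕ} (hp : 0 < p) (hr : r < p)
    {U ℓ : Finset (ZMod p × ZMod p)} (hcard : (#U : ℤ) = n * p - r)
    (hrich : ¬ IsRich p U ℓ) (hpoor : ¬ IsPoor p U ℓ) :
    (#(ℓ ∩ U) : ℤ) = n - 1 ∨ (#(ℓ ∩ U) : ℤ) = n := by
  rw [IsRich, not_le] at hrich
  rw [IsPoor, not_le] at hpoor
  have hpQ : (0 : ℚ) < p := by exact_mod_cast hp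
  have hθ : (#U : ℚ) / p = n - r / p := by
    rw [show (#U : ℚ) = n * p - r by exact_mod_cast hcard]
    field_simp
  have hfrac : (r : ℚ) / p < 1 := (div_lt_one hpQ).mpr (by exact_mod_cast hr)
  have hfrac0 : (0 : ℚ) ≤ r / p := by positivity
  have hupper : (#(ℓ ∩ U) : ℚ) < n + 1 := by linarith
  have hlower : (n : ℚ) - 2 < #(ℓ ∩ U) := by linarith
  have hupperZ : (#(ℓ ∩ U) : ℤ) < n + 1 := by exact_mod_cast hupper
  have hlowerZ : (n : ℤ) - 2 < #(ℓ ∩ U) := by exact_mod_cast hlower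
  omega

lemma eq_sub_ite_of_eq_sub_one_or_eq {a n : ℤ} (h : a = n - 1 ∨ a = n) :
    a = n - if a = n - 1 then 1 else 0 := by
  rcases h with h | h <;> simp [h, (sub_one_lt n).ne']

lemma mul_sub_one_eq_sub_ite_of_eq_sub_one_or_eq {a n : ℤ} (h : a = n - 1 ∨ a = n) :
    a * (a - 1) = n * (n - 1) - 2 * (n - 1) * if a = n - 1 then 1 else 0 := by
  rcases h with h | h <;> simp [h, (sub_one_lt n).ne']
  ring

section TwoValued

variable {ι : Type*} [Fintype ι] {f : ι → ℤ} {n r : ℤ}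

lemma card_filter_eq_sub_one_of_two_valued (hf : ∀ i, f i = n - 1 ∨ f i = n)
    (hsum : ∑ i, f i = n * Fintype.card ι - r) :
    (#{i | f i = n - 1} : ℤ) = r := by
  rw [← sub_right_inj (a := n * Fintype.card ι), ← hsum,
    sum_congr rfl fun i _ => eq_sub_ite_of_eq_sub_one_or_eq (hf i), sum_sub_distrib, sum_boole]
  simp [mul_comm]

lemma card_filter_eq_of_two_valued (hf : ∀ i, f i = n - 1 ∨ f i = n)
    (hsum : ∑ i, f i = n * Fintype.card ι - r) :
    (#{i | f i = n} : ℤ) = Fintype.card ι - r := by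
  have hcompl : univ.filter (fun i => f i = n) = univ.filter (fun i => ¬ f i = n - 1) := by
    ext i
    rcases hf i with h | h <;> simp [h, (sub_one_lt n).ne']
  rw [hcompl, filter_not, card_sdiff_of_subset (filter_subset _ _), card_univ,
    Nat.cast_sub (card_le_univ _), card_filter_eq_sub_one_of_two_valued hf hsum]

lemma sum_mul_sub_one_of_two_valued (hf : ∀ i, f i = n - 1 ∨ f i = n)
    (hsum : ∑ i, f i = n * Fintype.card ι - r) :
    ∑ i, f i * (f i - 1) = (n - 1) * (n * Fintype.card ι - 2 * r) := by
  rw [sum_congr rfl fun i _ => mul_sub_one_eq_sub_ite_of_eq_sub_one_or_eq (hf i),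
    sum_sub_distrib, sum_const, ← mul_sum, sum_boole,
    card_filter_eq_sub_one_of_two_valued hf hsum, card_univ, nsmul_eq_mul]
  ring

end TwoValued

theorem generic_direction_counts_general (p n r : ℕ) [Fact p.Prime]
    (U : Finset (ZMod p × ZMod p))
    (hr : r < p)
    (hcard : (U.card : ℤ) = n * p - r)
    (m : Option (ZMod p)) (hm : ¬ IsSpecialDir p U m) :
    ((Finset.univ.filter fun c : ZMod p =>
        ((lineWithSlope p m c ∩ U).card : ℤ) = (n : ℤ) - 1).card : ℤ) = r ∧
    ((Finset.univ.filter fun c : ZMod p =>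
        ((lineWithSlope p m c ∩ U).card : ℤ) = (n : ℤ)).card : ℤ) = (p : ℤ) - r ∧
    2 * (pairsCount p U m : ℤ) = ((n : ℤ) - 1) * ((n : ℤ) * p - 2 * r) := by
  simp only [IsSpecialDir, not_exists, not_or] at hm
  have htwo : ∀ c,
      (#(lineWithSlope p m c ∩ U) : ℤ) = n - 1 ∨ (#(lineWithSlope p m c ∩ U) : ℤ) = n :=
    fun c => card_inter_eq_of_not_isRich_of_not_isPoor (Fact.out : p.Prime).pos hr hcard
      (hm c).1 (hm c).2
  have hsum : ∑ c, (#(lineWithSlope p m c ∩ U) : ℤ) = n * Fintype.card (ZMod p) - r := by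
    rw [ZMod.card, ← hcard]
    exact_mod_cast sum_card_lineWithSlope_inter U m
  have hpairs : 2 * (pairsCount p U m : ℤ) =
      ∑ c, (#(lineWithSlope p m c ∩ U) : ℤ) * (#(lineWithSlope p m c ∩ U) - 1) := by
    simp only [pairsCount_eq_sum_choose, Nat.cast_sum, mul_sum, two_mul_cast_choose_two]
  refine ⟨card_filter_eq_sub_one_of_two_valued htwo hsum, ?_, ?_⟩
  · simpa only [ZMod.card] using card_filter_eq_of_two_valued htwo hsum
  · rw [hpairs, sum_mul_sub_one_of_two_valued htwo hsum, ZMod.card]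

theorem generic_direction_counts (p n r : ℕ) [Fact p.Prime]
    (U : Finset (ZMod p × ZMod p))
    (hn : 1 ≤ n) (hnp : n ≤ p) (hr : r < p)
    (hcard : (U.card : ℤ) = n * p - r)
    (m : Option (ZMod p)) (hm : ¬ IsSpecialDir p U m) :
    ((Finset.univ.filter fun c : ZMod p =>
        ((lineWithSlope p m c ∩ U).card : ℤ) = (n : ℤ) - 1).card : ℤ) = r ∧
    ((Finset.univ.filter fun c : ZMod p =>
        ((lineWithSlope p m c ∩ U).card : ℤ) = (n : ℤ)).card : ℤ) = (p : ℤ) - r ∧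
    2 * (pairsCount p U m : ℤ) = ((n : ℤ) - 1) * ((n : ℤ) * p - 2 * r) :=
  generic_direction_counts_general p n r U hr hcard m hm
end

section
/- Let p be a prime and U ⊆ F_p^2 with (n - 1)·p < #U ≤ n·p for some n ∈ ℕ. If m ∈ F_p is not a U-special direction, then for every natural number α ≤ n, the polynomial (x^p - x)^{n-α} divides the specialization at y = m of the α-th partial derivative ∂^α H_{U,n}/∂y^α, as polynomials in F_p[x]. -/
open Finset Polynomial

attribute [local instance] Classical.propDecidable

/-- The Rédei polynomial of `U`, as a polynomial in `x` over `F_p[y]`. -/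
noncomputable def redei (p : ℕ) (U : Finset (ZMod p × ZMod p)) :
    Polynomial (Polynomial (ZMod p)) :=
  ∏ q ∈ U, (Polynomial.X - Polynomial.C (Polynomial.C q.1 * Polynomial.X)
      + Polynomial.C (Polynomial.C q.2))

/-- The (n-th generalized) Szőnyi complement: the quotient of the division of
`(x^p - x)^n` by the Rédei polynomial in `(F_p[y])[x]`. -/
noncomputable def szonyi (p n : ℕ) (U : Finset (ZMod p × ZMod p)) :
    Polynomial (Polynomial (ZMod p)) :=
  ((Polynomial.X ^ p - Polynomial.X) ^ n) /ₘ redei p U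

/-- The Rédei–Szőnyi polynomial `H_{U,n} = R_U · S_{U,n}`. -/
noncomputable def RS (p n : ℕ) (U : Finset (ZMod p × ZMod p)) :
    Polynomial (Polynomial (ZMod p)) :=
  redei p U * szonyi p n U

/-- The `y`-derivative of a bivariate polynomial in `(F_p[y])[x]`: differentiate
each `x`-coefficient with respect to `y`. -/
noncomputable def dY {R : Type*} [CommSemiring R]
    (H : Polynomial (Polynomial R)) : Polynomial (Polynomial R) :=
  H.sum fun i c => Polynomial.C (Polynomial.derivative c) * Polynomial.X ^ i


/-!
Fix `e ∈ F_p`, let `t_e` be the number of points of `U` on the line `v = m u - e` (those whose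
Rédei factor vanishes at `(x, y) = (e, m)`), and let `I_e = (x - e, y - m)`. Since `m` is not
special, `t_e ∈ {n - 1, n}`. The Rédei polynomial lies in `I_e ^ t_e`; at `y = m` the Szőnyi
complement becomes `∏ (x - e) ^ (n - t_e)`, so it lies in `I_e ^ (n - t_e)`. Hence `H ∈ I_e ^ n`.
A derivation maps `I ^ k` into `I ^ (k - 1)`, so `∂_y^α H ∈ I_e ^ (n - α)`, and setting `y = m`
gives `(x - e) ^ (n - α) ∣ ∂_y^α H (x, m)`. The coprime factors `x - e` multiply to `x ^ p - x`.
-/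

section Derivation

variable {R A : Type*} [CommSemiring R] [CommSemiring A] [Algebra R A]

theorem Derivation.apply_mem_pow_pred (D : Derivation R A A) {I : Ideal A} {k : ℕ} {a : A}
    (ha : a ∈ I ^ k) : D a ∈ I ^ (k - 1) := by
  induction k generalizing a with
  | zero => simp
  | succ k ih =>
    rw [pow_succ'] at ha
    refine Submodule.mul_induction_on ha (fun x hx y hy => ?_) (fun x y hx hy => ?_)
    · rw [D.leibniz, smul_eq_mul, smul_eq_mul]
      refine add_mem ?_ (Ideal.mul_mem_right _ _ hy)
      rcases k with _ | k
      · simp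
      · rw [Nat.add_sub_cancel, pow_succ']
        exact Ideal.mul_mem_mul hx (ih hy)
    · rw [map_add]
      exact add_mem hx hy

theorem Derivation.iterate_mem_pow_sub (D : Derivation R A A) {I : Ideal A} {k : ℕ} {a : A}
    (ha : a ∈ I ^ k) (j : ℕ) : (⇑D)^[j] a ∈ I ^ (k - j) := by
  induction j with
  | zero => simpa using ha
  | succ j ih =>
    rw [Function.iterate_succ_apply', Nat.sub_succ]
    exact D.apply_mem_pow_pred ih

end Derivation

section dY

variable {R : Type*} [CommRing R]

@[simp]
theorem coeff_dY (H : R[X][X]) (i : ℕ) : (dY H).coeff i = derivative (H.coeff i) := by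
  simp only [dY, Polynomial.sum, finsetSum_coeff, coeff_C_mul, coeff_X_pow, mul_ite, mul_one,
    mul_zero, Finset.sum_ite_eq, mem_support_iff]
  split_ifs with h <;> simp_all

noncomputable def dYDerivation : Derivation R R[X][X] R[X][X] :=
  Derivation.mk'
    { toFun := dY
      map_add' := fun P Q => by ext1 i; simp
      map_smul' := fun r P => by ext1 i; simp }
    (fun P Q => by
      ext1 i
      simp only [LinearMap.coe_mk, AddHom.coe_mk, smul_eq_mul]
      rw [mul_comm Q, add_comm]
      simp only [coeff_add, coeff_dY, coeff_mul, map_sum, derivative_mul, Finset.sum_add_distrib])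

end dY

theorem FiniteField.prod_X_sub_C_eq_X_pow_card_sub_X (K : Type*) [Field K] [Fintype K] :
    ∏ a : K, (X - C a) = X ^ Fintype.card K - X := by
  have hcard : 1 < Fintype.card K := Fintype.one_lt_card
  have hmonic : (X ^ Fintype.card K - X : K[X]).Monic :=
    monic_X_pow_sub (degree_X_le.trans_lt (by exact_mod_cast hcard))
  have hroots := FiniteField.roots_X_pow_card_sub_X K
  rw [Finset.prod_eq_multiset_prod, ← hroots,
    prod_multiset_X_sub_C_of_monic_of_roots_card_eq hmonic]
  rw [hroots, FiniteField.X_pow_card_sub_X_natDegree_eq K hcard]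
  rfl

theorem FiniteField.X_pow_card_sub_X_pow_dvd {K : Type*} [Field K] [Fintype K] {f : K[X]}
    {k : ℕ} (h : ∀ a : K, (X - C a) ^ k ∣ f) : (X ^ Fintype.card K - X) ^ k ∣ f := by
  rw [← FiniteField.prod_X_sub_C_eq_X_pow_card_sub_X, ← Finset.prod_pow]
  exact Fintype.prod_dvd_of_coprime
    (fun a b hab => ((pairwise_coprime_X_sub_C Function.injective_id) hab).pow) h

section PointIdeal

variable {R : Type*} [CommRing R]

/-- The ideal `(x - x₀, y - y₀)` of `R[y][x]`. -/
noncomputable def pointIdeal (x₀ y₀ : R) : Ideal R[X][X] :=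
  Ideal.span {X - C (C x₀), C (X - C y₀)}

theorem mem_pointIdeal_of_dvd_map_eval {x₀ y₀ : R} {P : R[X][X]}
    (h : X - C x₀ ∣ P.map (evalRingHom y₀)) : P ∈ pointIdeal x₀ y₀ := by
  obtain ⟨u, hu⟩ : C (X - C y₀) ∣ P - (P.map (evalRingHom y₀)).map C := by
    rw [C_dvd_iff_dvd_coeff]
    intro i
    simpa using X_sub_C_dvd_sub_C_eval (p := P.coeff i) (a := y₀)
  obtain ⟨v, hv⟩ := h
  rw [← sub_add_cancel P ((P.map (evalRingHom y₀)).map C), hu, hv, Polynomial.map_mul]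
  refine add_mem (Ideal.mul_mem_right _ _ (Ideal.subset_span (by simp)))
    (Ideal.mul_mem_right _ _ (Ideal.subset_span ?_))
  simp

theorem map_pointIdeal (x₀ y₀ : R) :
    (pointIdeal x₀ y₀).map (mapRingHom (evalRingHom y₀)) = Ideal.span {X - C x₀} := by
  rw [pointIdeal, Ideal.map_span, Set.image_pair, Set.pair_comm]
  simp

theorem dvd_map_eval_of_mem_pointIdeal_pow {x₀ y₀ : R} {P : R[X][X]} {k : ℕ}
    (h : P ∈ pointIdeal x₀ y₀ ^ k) : (X - C x₀) ^ k ∣ P.map (evalRingHom y₀) := by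
  have := Ideal.mem_map_of_mem (mapRingHom (evalRingHom y₀)) h
  rwa [Ideal.map_pow, map_pointIdeal, Ideal.span_singleton_pow, Ideal.mem_span_singleton]
    at this

end PointIdeal

theorem card_inter_bounds_of_not_isRich_of_not_isPoor {p n : ℕ} [NeZero p]
    {U ℓ : Finset (ZMod p × ZMod p)}
    (h1 : (n - 1) * p < #U) (h2 : #U ≤ n * p) (hrich : ¬ IsRich p U ℓ)
    (hpoor : ¬ IsPoor p U ℓ) : #(ℓ ∩ U) ≤ n ∧ n ≤ #(ℓ ∩ U) + 1 := by
  rw [IsRich, not_le] at hrich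
  rw [IsPoor, not_le] at hpoor
  have hp : (0 : ℚ) < p := by exact_mod_cast Nat.pos_of_neZero p
  have hle : (#U : ℚ) / p ≤ n := by
    rw [div_le_iff₀ hp]
    exact_mod_cast h2
  have hlt : (n : ℚ) - 1 < #U / p := by
    rw [lt_div_iff₀ hp]
    have : (n : ℚ) - 1 ≤ ((n - 1 : ℕ) : ℚ) := by
      rw [sub_le_iff_le_add]
      exact_mod_cast (show n ≤ n - 1 + 1 by omega)
    calc ((n : ℚ) - 1) * p ≤ ((n - 1 : ℕ) : ℚ) * p := by gcongr
      _ < #U := by exact_mod_cast h1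
  have hub : #(ℓ ∩ U) < n + 1 := by exact_mod_cast (show (#(ℓ ∩ U) : ℚ) < n + 1 by linarith)
  have hlb : n < #(ℓ ∩ U) + 2 := by exact_mod_cast (show (n : ℚ) < #(ℓ ∩ U) + 2 by linarith)
  omega

theorem lineWithSlope_some_inter {p : ℕ} [NeZero p] (m e : ZMod p)
    (U : Finset (ZMod p × ZMod p)) :
    lineWithSlope p (some m) (-e) ∩ U = {q ∈ U | q.1 * m - q.2 = e} := by
  ext q
  simp only [lineWithSlope, Finset.mem_inter, Finset.mem_filter, Finset.mem_univ, true_and]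
  constructor
  · rintro ⟨hℓ, hU⟩
    exact ⟨hU, by linear_combination -hℓ⟩
  · rintro ⟨hU, hq⟩
    exact ⟨by linear_combination -hq, hU⟩

theorem ZMod.prod_X_sub_C_eq_X_pow_sub_X (p : ℕ) [Fact p.Prime] :
    ∏ a : ZMod p, (X - C a) = X ^ p - X := by
  rw [FiniteField.prod_X_sub_C_eq_X_pow_card_sub_X, ZMod.card]

theorem redei_eq_prod (p : ℕ) (U : Finset (ZMod p × ZMod p)) :
    redei p U = ∏ q ∈ U, (X - C (C q.1 * X - C q.2)) :=
  Finset.prod_congr rfl fun q _ => by rw [map_sub]; ring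

theorem redei_monic (p : ℕ) (U : Finset (ZMod p × ZMod p)) : (redei p U).Monic := by
  rw [redei_eq_prod]
  exact monic_prod_of_monic _ _ fun q _ => monic_X_sub_C _

theorem map_redei_eval {p : ℕ} [NeZero p] (U : Finset (ZMod p × ZMod p)) (m : ZMod p) :
    (redei p U).map (evalRingHom m) = ∏ e, (X - C e) ^ #{q ∈ U | q.1 * m - q.2 = e} := by
  have hfactor (q : ZMod p × ZMod p) :
      (X - C (C q.1 * X - C q.2)).map (evalRingHom m) = X - C (q.1 * m - q.2) := by
    simp
  simp only [redei_eq_prod, Polynomial.map_prod, hfactor,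
    ← Finset.prod_fiberwise' U (fun q => q.1 * m - q.2) (fun e => X - C e)]
  exact Finset.prod_congr rfl fun e _ => Finset.prod_const _

theorem map_szonyi_eval {p n : ℕ} [Fact p.Prime] {U : Finset (ZMod p × ZMod p)} {m : ZMod p}
    (ht : ∀ e, #{q ∈ U | q.1 * m - q.2 = e} ≤ n) :
    (szonyi p n U).map (evalRingHom m)
      = ∏ e, (X - C e) ^ (n - #{q ∈ U | q.1 * m - q.2 = e}) := by
  have hsplit : ((X ^ p - X) ^ n : (ZMod p)[X]) = (redei p U).map (evalRingHom m)
      * ∏ e, (X - C e) ^ (n - #{q ∈ U | q.1 * m - q.2 = e}) := by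
    rw [map_redei_eval, ← Finset.prod_mul_distrib, ← ZMod.prod_X_sub_C_eq_X_pow_sub_X,
      ← Finset.prod_pow]
    exact Finset.prod_congr rfl fun e _ => by rw [← pow_add, Nat.add_sub_cancel' (ht e)]
  rw [szonyi, map_divByMonic _ (redei_monic p U), Polynomial.map_pow, Polynomial.map_sub,
    Polynomial.map_pow, map_X, hsplit, mul_divByMonic_cancel_left _ ((redei_monic p U).map _)]

theorem redei_mem_pointIdeal_pow {p : ℕ} (U : Finset (ZMod p × ZMod p)) (m e : ZMod p) :
    redei p U ∈ pointIdeal e m ^ #{q ∈ U | q.1 * m - q.2 = e} := by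
  have hfactor : ∀ q ∈ U.filter (fun q => q.1 * m - q.2 = e),
      X - C (C q.1 * X - C q.2) ∈ pointIdeal e m := by
    intro q hq
    rw [← (Finset.mem_filter.mp hq).2,
      show X - C (C q.1 * X - C q.2) = X - C (C (q.1 * m - q.2)) - C (C q.1) * C (X - C m) by
        simp only [map_sub, map_mul]; ring]
    exact sub_mem (Ideal.subset_span (by simp))
      (Ideal.mul_mem_left _ _ (Ideal.subset_span (by simp)))
  rw [redei_eq_prod, ← Finset.prod_filter_mul_prod_filter_not U (fun q => q.1 * m - q.2 = e)]
  exact Ideal.mul_mem_right _ _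
    (by simpa using Ideal.prod_mem_prod (I := fun _ => pointIdeal e m) hfactor)

theorem szonyi_mem_pointIdeal_pow {p n : ℕ} [Fact p.Prime] {U : Finset (ZMod p × ZMod p)}
    {m : ZMod p} (ht : ∀ e, #{q ∈ U | q.1 * m - q.2 = e} ≤ n) {e : ZMod p}
    (hte : n ≤ #{q ∈ U | q.1 * m - q.2 = e} + 1) :
    szonyi p n U ∈ pointIdeal e m ^ (n - #{q ∈ U | q.1 * m - q.2 = e}) := by
  obtain h | h : n - #{q ∈ U | q.1 * m - q.2 = e} = 0 ∨ n - #{q ∈ U | q.1 * m - q.2 = e} = 1 := by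
    omega
  · simp [h]
  rw [h, Submodule.pow_one]
  apply mem_pointIdeal_of_dvd_map_eval
  rw [map_szonyi_eval ht]
  exact (dvd_pow_self _ (by omega)).trans (Finset.dvd_prod_of_mem _ (Finset.mem_univ e))

theorem RS_mem_pointIdeal_pow {p n : ℕ} [Fact p.Prime] {U : Finset (ZMod p × ZMod p)}
    {m : ZMod p} (ht : ∀ e, #{q ∈ U | q.1 * m - q.2 = e} ≤ n) {e : ZMod p}
    (hte : n ≤ #{q ∈ U | q.1 * m - q.2 = e} + 1) : RS p n U ∈ pointIdeal e m ^ n := by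
  have h := (pow_add (pointIdeal e m) _ _).ge
    (Ideal.mul_mem_mul (redei_mem_pointIdeal_pow U m e) (szonyi_mem_pointIdeal_pow ht hte))
  rwa [Nat.add_sub_cancel' (ht e)] at h

theorem RS_y_derivative_divisibility_general (p n : ℕ) [Fact p.Prime]
    (U : Finset (ZMod p × ZMod p))
    (h1 : (n - 1) * p < U.card) (h2 : U.card ≤ n * p)
    (m : ZMod p) (hm : ¬ IsSpecialDir p U (some m))
    (α : ℕ) :
    (Polynomial.X ^ p - Polynomial.X) ^ (n - α)
      ∣ Polynomial.map (Polynomial.evalRingHom m) (dY^[α] (RS p n U)) := by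
  have hcount (e : ZMod p) :
      #{q ∈ U | q.1 * m - q.2 = e} ≤ n ∧ n ≤ #{q ∈ U | q.1 * m - q.2 = e} + 1 := by
    rw [← lineWithSlope_some_inter]
    exact card_inter_bounds_of_not_isRich_of_not_isPoor h1 h2 (fun h => hm ⟨-e, .inl h⟩)
      (fun h => hm ⟨-e, .inr h⟩)
  have := FiniteField.X_pow_card_sub_X_pow_dvd fun e => dvd_map_eval_of_mem_pointIdeal_pow
    (dYDerivation.iterate_mem_pow_sub
      (RS_mem_pointIdeal_pow (fun e => (hcount e).1) (hcount e).2) α)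
  rwa [ZMod.card] at this

theorem RS_y_derivative_divisibility (p n : ℕ) [Fact p.Prime]
    (U : Finset (ZMod p × ZMod p))
    (h1 : (n - 1) * p < U.card) (h2 : U.card ≤ n * p)
    (m : ZMod p) (hm : ¬ IsSpecialDir p U (some m))
    (α : ℕ) (hα : α ≤ n) :
    (Polynomial.X ^ p - Polynomial.X) ^ (n - α)
      ∣ Polynomial.map (Polynomial.evalRingHom m) (dY^[α] (RS p n U)) :=
  RS_y_derivative_divisibility_general p n U h1 h2 m hm α
end
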